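/- arXiv:2107.01990 — 5 statements merged into one kernel-verified Lean document; each statement's English description precedes it below -/
import Mathlib

section
/- Let V be an n×k matrix over K with orthonormal columns, and let V', X ⊆ K^n be subspaces with dim X ≥ dim V' = j, V' ⊆ range(V), and all principal angles between X and V' strictly less than π/2. Then the subspace W = V* X ⊆ K^k satisfies dim W ≥ j, and with H' = V* V' one has θ_i(W, H') ≤ θ_i(X, V') for 1 ≤ i ≤ j. -/
open Matrix Submodule

variable {𝕜 : Type*} [RCLike 𝕜]

noncomputable def projMat {n : ℕ} (S : Submodule 𝕜 (EuclideanSpace 𝕜 (Fin n))) :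
    Matrix (Fin n) (Fin n) 𝕜 :=
  Matrix.toEuclideanLin.symm ((S.subtypeL.comp (orthogonalProjection S)).toLinearMap)

noncomputable def singVal {m n : ℕ} (M : Matrix (Fin m) (Fin n) 𝕜) (j : Fin n) : ℝ :=
  Real.sqrt ((Matrix.isHermitian_conjTranspose_mul_self M).eigenvalues
    (Tuple.sort (Matrix.isHermitian_conjTranspose_mul_self M).eigenvalues j.rev))

noncomputable def singValN {m n : ℕ} (M : Matrix (Fin m) (Fin n) 𝕜) (j : ℕ) : ℝ :=
  if h : j < n then singVal M ⟨j, h⟩ else 0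

noncomputable def specNorm {m n : ℕ} (M : Matrix (Fin m) (Fin n) 𝕜) : ℝ :=
  ‖LinearMap.toContinuousLinearMap (Matrix.toEuclideanLin M)‖

noncomputable def frobNorm {m n : ℕ} (M : Matrix (Fin m) (Fin n) 𝕜) : ℝ :=
  Real.sqrt (∑ i, ∑ j, ‖M i j‖ ^ 2)

noncomputable def principalAngle {n : ℕ} (S T : Submodule 𝕜 (EuclideanSpace 𝕜 (Fin n))) (i : ℕ) : ℝ :=
  Real.arccos (singValN (projMat S * projMat T) i)

def IsMoorePenrose {m n : ℕ} (A : Matrix (Fin m) (Fin n) 𝕜) (B : Matrix (Fin n) (Fin m) 𝕜) : Prop :=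
  A * B * A = A ∧ B * A * B = B ∧ (A * B)ᴴ = A * B ∧ (B * A)ᴴ = B * A

/-!
`V` is an isometry `𝕜^k → 𝕜^n` with adjoint `V*`; put `W = V* X`, `H' = V* V'`.
For `i < j` the `i`-th singular value `s` of `P_X P_V'` is positive, and by Courant–Fischer it is
attained from below on an `(i + 1)`-dimensional `U`: `s ‖y‖ ≤ ‖P_X P_V' y‖` for `y ∈ U`. The image
`V* P_V' U ⊆ H'` still has dimension `i + 1`, and on it `‖P_W P_H' x‖ = ‖P_W x‖ ≥ ‖P_X (V x)‖ ≥ s ‖x‖`.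
The middle inequality is the heart of the matter: for `u = P_X (V x)`,
`‖u‖² = ⟪V* u, P_W x⟫ ≤ ‖V* u‖ ‖P_W x‖ ≤ ‖u‖ ‖P_W x‖`, since `V* u ∈ W` and `V*` is a contraction.
Courant–Fischer again gives `s ≤ σ_i(P_W P_H')`, i.e. the angle does not increase; for `i = j - 1`
the bound shows that `P_W` is injective on a `j`-dimensional space, so `j ≤ dim W`.
-/

open Module RCLike
open scoped InnerProductSpace

lemma Matrix.re_inner_toEuclideanLin_conjTranspose_mul_self {m n : ℕ}
    (M : Matrix (Fin m) (Fin n) 𝕜) (x : EuclideanSpace 𝕜 (Fin n)) :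
    re ⟪x, toEuclideanLin (Mᴴ * M) x⟫_𝕜 = ‖toEuclideanLin M x‖ ^ 2 := by
  rw [toLpLin_mul_same, LinearMap.comp_apply, toEuclideanLin_conjTranspose_eq_adjoint,
    LinearMap.adjoint_inner_right, inner_self_eq_norm_sq]

lemma toEuclideanLin_projMat_mul_projMat_apply {n : ℕ}
    (S T : Submodule 𝕜 (EuclideanSpace 𝕜 (Fin n))) (x : EuclideanSpace 𝕜 (Fin n)) :
    toEuclideanLin (projMat S * projMat T) x = S.starProjection (T.starProjection x) := by
  rw [toLpLin_mul_same, projMat, projMat, LinearEquiv.apply_symm_apply,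
    LinearEquiv.apply_symm_apply]
  rfl

lemma Submodule.finrank_le_finrank_of_mul_norm_le {E F : Type*} [NormedAddCommGroup E]
    [NormedSpace 𝕜 E] [NormedAddCommGroup F] [NormedSpace 𝕜 F] [FiniteDimensional 𝕜 F]
    (f : E →ₗ[𝕜] F) {U : Submodule 𝕜 E} {S : Submodule 𝕜 F} (hfS : ∀ x ∈ U, f x ∈ S)
    {c : ℝ} (hc : 0 < c) (hf : ∀ x ∈ U, c * ‖x‖ ≤ ‖f x‖) :
    finrank 𝕜 U ≤ finrank 𝕜 S := by
  refine LinearMap.finrank_le_finrank_of_injective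
    (f := (f ∘ₗ U.subtype).codRestrict S fun x ↦ hfS x x.2)
    ((injective_iff_map_eq_zero _).mpr fun x hx ↦ ?_)
  have hfx : f x = 0 := congrArg Subtype.val hx
  have := hf x x.2
  rw [hfx, norm_zero] at this
  exact Subtype.ext (norm_le_zero_iff.mp (nonpos_of_mul_nonpos_right this hc))

namespace Matrix.IsHermitian

variable {m : ℕ} {A : Matrix (Fin m) (Fin m) 𝕜} (hA : A.IsHermitian)

noncomputable def eigenSpan (s : Finset (Fin m)) : Submodule 𝕜 (EuclideanSpace 𝕜 (Fin m)) :=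
  span 𝕜 (hA.eigenvectorBasis '' s)

noncomputable def sortedEigenvalue (r : Fin m) : ℝ :=
  hA.eigenvalues (Tuple.sort hA.eigenvalues r)

lemma finrank_eigenSpan (s : Finset (Fin m)) : finrank 𝕜 (hA.eigenSpan s) = s.card := by
  rw [eigenSpan, Set.image_eq_range]
  exact (finrank_span_eq_card
    (hA.eigenvectorBasis.orthonormal.linearIndependent.comp _ Subtype.val_injective)).trans
    (by simp)

lemma inner_eigenvectorBasis_eq_zero_of_mem_eigenSpan {s : Finset (Fin m)} {x}
    (hx : x ∈ hA.eigenSpan s) {i : Fin m} (hi : i ∉ s) :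
    ⟪hA.eigenvectorBasis i, x⟫_𝕜 = 0 := by
  induction hx using span_induction with
  | mem y hy =>
    obtain ⟨l, hl, rfl⟩ := hy
    exact hA.eigenvectorBasis.orthonormal.2 fun h ↦ hi (h ▸ hl)
  | zero => exact inner_zero_right _
  | add y z _ _ hy hz => rw [inner_add_right, hy, hz, add_zero]
  | smul c y _ hy => rw [inner_smul_right, hy, mul_zero]

lemma toEuclideanLin_eigenvectorBasis (i : Fin m) :
    toEuclideanLin A (hA.eigenvectorBasis i) =
      (hA.eigenvalues i : 𝕜) • hA.eigenvectorBasis i := by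
  rw [toLpLin_apply, hA.mulVec_eigenvectorBasis, RCLike.real_smul_eq_coe_smul (K := 𝕜)]
  rfl

lemma re_inner_toEuclideanLin_self (x : EuclideanSpace 𝕜 (Fin m)) :
    re ⟪x, toEuclideanLin A x⟫_𝕜 =
      ∑ i, hA.eigenvalues i * ‖⟪hA.eigenvectorBasis i, x⟫_𝕜‖ ^ 2 := by
  have hsymm := isSymmetric_toEuclideanLin_iff.mpr hA
  rw [← hA.eigenvectorBasis.sum_inner_mul_inner, map_sum]
  refine Finset.sum_congr rfl fun i _ ↦ ?_
  rw [← hsymm, toEuclideanLin_eigenvectorBasis, inner_smul_left, RCLike.conj_ofReal,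
    ← inner_conj_symm x, mul_left_comm, RCLike.conj_mul, ← RCLike.ofReal_pow,
    ← RCLike.ofReal_mul, RCLike.ofReal_re]

lemma re_inner_toEuclideanLin_self_le_of_mem_eigenSpan {s : Finset (Fin m)} {c : ℝ}
    (hs : ∀ i ∈ s, hA.eigenvalues i ≤ c) {x} (hx : x ∈ hA.eigenSpan s) :
    re ⟪x, toEuclideanLin A x⟫_𝕜 ≤ c * ‖x‖ ^ 2 := by
  rw [re_inner_toEuclideanLin_self, ← hA.eigenvectorBasis.sum_sq_norm_inner_right, Finset.mul_sum]
  refine Finset.sum_le_sum fun i _ ↦ ?_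
  by_cases hi : i ∈ s
  · exact mul_le_mul_of_nonneg_right (hs i hi) (sq_nonneg _)
  · simp [hA.inner_eigenvectorBasis_eq_zero_of_mem_eigenSpan hx hi]

lemma le_re_inner_toEuclideanLin_self_of_mem_eigenSpan {s : Finset (Fin m)} {c : ℝ}
    (hs : ∀ i ∈ s, c ≤ hA.eigenvalues i) {x} (hx : x ∈ hA.eigenSpan s) :
    c * ‖x‖ ^ 2 ≤ re ⟪x, toEuclideanLin A x⟫_𝕜 := by
  rw [re_inner_toEuclideanLin_self, ← hA.eigenvectorBasis.sum_sq_norm_inner_right, Finset.mul_sum]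
  refine Finset.sum_le_sum fun i _ ↦ ?_
  by_cases hi : i ∈ s
  · exact mul_le_mul_of_nonneg_right (hs i hi) (sq_nonneg _)
  · simp [hA.inner_eigenvectorBasis_eq_zero_of_mem_eigenSpan hx hi]

lemma exists_finrank_eq_sortedEigenvalue_mul_le (r : Fin m) :
    ∃ U : Submodule 𝕜 (EuclideanSpace 𝕜 (Fin m)), finrank 𝕜 U = m - r ∧
      ∀ x ∈ U, hA.sortedEigenvalue r * ‖x‖ ^ 2 ≤ re ⟪x, toEuclideanLin A x⟫_𝕜 := by
  refine ⟨hA.eigenSpan ((Finset.Ici r).image (Tuple.sort hA.eigenvalues)), ?_, fun x hx ↦ ?_⟩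
  · rw [finrank_eigenSpan, Finset.card_image_of_injective _ (Equiv.injective _), Fin.card_Ici]
  · refine hA.le_re_inner_toEuclideanLin_self_of_mem_eigenSpan (fun i hi ↦ ?_) hx
    obtain ⟨u, hu, rfl⟩ := Finset.mem_image.mp hi
    exact Tuple.monotone_sort hA.eigenvalues (Finset.mem_Ici.mp hu)

lemma le_sortedEigenvalue_of_forall_mul_le {r : Fin m}
    {U : Submodule 𝕜 (EuclideanSpace 𝕜 (Fin m))} (hU : m - r ≤ finrank 𝕜 U) {c : ℝ}
    (hc : ∀ x ∈ U, c * ‖x‖ ^ 2 ≤ re ⟪x, toEuclideanLin A x⟫_𝕜) :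
    c ≤ hA.sortedEigenvalue r := by
  set L := hA.eigenSpan ((Finset.Iic r).image (Tuple.sort hA.eigenvalues))
  have hL : finrank 𝕜 L = r + 1 := by
    rw [finrank_eigenSpan, Finset.card_image_of_injective _ (Equiv.injective _), Fin.card_Iic]
  obtain ⟨x, ⟨hxU, hxL⟩, hx0⟩ : ∃ x ∈ U ⊓ L, x ≠ 0 := by
    have hsup := Submodule.finrank_sup_add_finrank_inf_eq U L
    have hle := (U ⊔ L).finrank_le
    rw [finrank_euclideanSpace_fin] at hle
    exact Submodule.exists_mem_ne_zero_of_ne_bot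
      (Submodule.one_le_finrank_iff.mp (by omega))
  have hupper : re ⟪x, toEuclideanLin A x⟫_𝕜 ≤ hA.sortedEigenvalue r * ‖x‖ ^ 2 := by
    refine hA.re_inner_toEuclideanLin_self_le_of_mem_eigenSpan (fun i hi ↦ ?_) hxL
    obtain ⟨u, hu, rfl⟩ := Finset.mem_image.mp hi
    exact Tuple.monotone_sort hA.eigenvalues (Finset.mem_Iic.mp hu)
  exact le_of_mul_le_mul_right ((hc x hxU).trans hupper) (by positivity)

end Matrix.IsHermitian

section SingularValues

variable {m n : ℕ} (M : Matrix (Fin m) (Fin n) 𝕜)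

lemma singValN_eq_sqrt_sortedEigenvalue {i : ℕ} (hi : i < n) :
    singValN M i =
      √((isHermitian_conjTranspose_mul_self M).sortedEigenvalue (Fin.rev ⟨i, hi⟩)) := by
  rw [singValN, dif_pos hi]
  rfl

lemma le_singValN_of_forall_mul_norm_le {i : ℕ} {U : Submodule 𝕜 (EuclideanSpace 𝕜 (Fin n))}
    (hU : i + 1 ≤ finrank 𝕜 U) {c : ℝ} (hc : 0 ≤ c)
    (hcU : ∀ x ∈ U, c * ‖x‖ ≤ ‖toEuclideanLin M x‖) : c ≤ singValN M i := by
  have hi : i < n := by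
    have := U.finrank_le
    rw [finrank_euclideanSpace_fin] at this
    omega
  rw [singValN_eq_sqrt_sortedEigenvalue M hi]
  refine Real.le_sqrt_of_sq_le <|
    (isHermitian_conjTranspose_mul_self M).le_sortedEigenvalue_of_forall_mul_le (U := U)
      (by simp only [Fin.val_rev]; omega) fun x hx ↦ ?_
  rw [re_inner_toEuclideanLin_conjTranspose_mul_self, ← mul_pow]
  exact pow_le_pow_left₀ (by positivity) (hcU x hx) 2

lemma exists_finrank_eq_singValN_mul_norm_le {i : ℕ} (hi : i < n) :
    ∃ U : Submodule 𝕜 (EuclideanSpace 𝕜 (Fin n)), finrank 𝕜 U = i + 1 ∧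
      ∀ x ∈ U, singValN M i * ‖x‖ ≤ ‖toEuclideanLin M x‖ := by
  obtain ⟨U, hU, hU'⟩ :=
    (isHermitian_conjTranspose_mul_self M).exists_finrank_eq_sortedEigenvalue_mul_le
      (Fin.rev ⟨i, hi⟩)
  refine ⟨U, by simp only [hU, Fin.val_rev]; omega, fun x hx ↦ ?_⟩
  have h := Real.sqrt_le_sqrt (hU' x hx)
  rwa [re_inner_toEuclideanLin_conjTranspose_mul_self, Real.sqrt_sq (norm_nonneg _),
    Real.sqrt_mul' _ (sq_nonneg _), Real.sqrt_sq (norm_nonneg _),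
    ← singValN_eq_sqrt_sortedEigenvalue M hi] at h

end SingularValues

namespace LinearMap

variable {E F : Type*} [NormedAddCommGroup E] [InnerProductSpace 𝕜 E] [FiniteDimensional 𝕜 E]
  [NormedAddCommGroup F] [InnerProductSpace 𝕜 F] [FiniteDimensional 𝕜 F]
  {T : F →ₗ[𝕜] E} (hT : T.adjoint ∘ₗ T = LinearMap.id)
include hT

lemma norm_map_of_adjoint_comp_self_eq_id (x : F) : ‖T x‖ = ‖x‖ :=
  (LinearMap.norm_map_iff_inner_map_map T).mpr (fun x y ↦ by
    rw [← adjoint_inner_left, ← comp_apply, hT, id_apply]) x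

lemma norm_adjoint_apply_le_of_adjoint_comp_self_eq_id (u : E) : ‖T.adjoint u‖ ≤ ‖u‖ := by
  have h : ‖T.adjoint u‖ ^ 2 ≤ ‖u‖ * ‖T.adjoint u‖ := by
    calc ‖T.adjoint u‖ ^ 2 = re ⟪T (T.adjoint u), u⟫_𝕜 := by
          rw [← adjoint_inner_right, inner_self_eq_norm_sq]
      _ ≤ ‖T (T.adjoint u)‖ * ‖u‖ := re_inner_le_norm _ _
      _ = ‖u‖ * ‖T.adjoint u‖ := by
          rw [norm_map_of_adjoint_comp_self_eq_id hT, mul_comm]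
  nlinarith [norm_nonneg u, norm_nonneg (T.adjoint u)]

lemma apply_adjoint_apply_of_mem_range {z : E} (hz : z ∈ range T) : T (T.adjoint z) = z := by
  obtain ⟨x, rfl⟩ := hz
  rw [← comp_apply T.adjoint, hT, id_apply]

lemma norm_adjoint_apply_of_mem_range {z : E} (hz : z ∈ range T) : ‖T.adjoint z‖ = ‖z‖ := by
  rw [← norm_map_of_adjoint_comp_self_eq_id hT, apply_adjoint_apply_of_mem_range hT hz]

lemma norm_starProjection_apply_le_norm_starProjection_map_adjoint (X : Submodule 𝕜 E)
    (x : F) : ‖X.starProjection (T x)‖ ≤ ‖(X.map T.adjoint).starProjection x‖ := by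
  set u := X.starProjection (T x)
  set W := X.map T.adjoint
  have h : ‖u‖ ^ 2 ≤ ‖u‖ * ‖W.starProjection x‖ := by
    calc ‖u‖ ^ 2 = re ⟪u, T x⟫_𝕜 := (re_inner_starProjection_eq_normSq X (T x)).symm
      _ = re ⟪T.adjoint u, W.starProjection x⟫_𝕜 := by
          rw [← inner_starProjection_left_eq_right,
            starProjection_eq_self_iff.mpr (mem_map_of_mem (starProjection_apply_mem X _)),
            adjoint_inner_left]
      _ ≤ ‖T.adjoint u‖ * ‖W.starProjection x‖ := re_inner_le_norm _ _
      _ ≤ ‖u‖ * ‖W.starProjection x‖ := by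
          gcongr
          exact norm_adjoint_apply_le_of_adjoint_comp_self_eq_id hT u
  nlinarith [norm_nonneg u, norm_nonneg (W.starProjection x)]

lemma exists_finrank_le_mul_norm_le_norm_starProjection_map_adjoint {X V' U : Submodule 𝕜 E}
    (hV' : V' ≤ range T) {c : ℝ} (hc : 0 < c)
    (hU : ∀ y ∈ U, c * ‖y‖ ≤ ‖X.starProjection (V'.starProjection y)‖) :
    ∃ U' : Submodule 𝕜 F, finrank 𝕜 U ≤ finrank 𝕜 U' ∧ U' ≤ V'.map T.adjoint ∧
      ∀ x ∈ U', c * ‖x‖ ≤ ‖(X.map T.adjoint).starProjection x‖ := by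
  have hproj : ∀ y, V'.starProjection y ∈ range T :=
    fun y ↦ hV' (starProjection_apply_mem V' y)
  refine ⟨U.map (T.adjoint ∘ₗ V'.starProjection), ?_, ?_, ?_⟩
  · refine Submodule.finrank_le_finrank_of_mul_norm_le _ (fun y hy ↦ mem_map_of_mem hy) hc
      fun y hy ↦ (hU y hy).trans ?_
    rw [comp_apply, ContinuousLinearMap.coe_coe, norm_adjoint_apply_of_mem_range hT (hproj y)]
    exact norm_starProjection_apply_le X _
  · rintro _ ⟨y, -, rfl⟩
    exact mem_map_of_mem (starProjection_apply_mem V' y)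
  · rintro _ ⟨y, hy, rfl⟩
    rw [comp_apply, ContinuousLinearMap.coe_coe]
    calc c * ‖T.adjoint (V'.starProjection y)‖ = c * ‖V'.starProjection y‖ := by
          rw [norm_adjoint_apply_of_mem_range hT (hproj y)]
      _ ≤ c * ‖y‖ := by gcongr; exact norm_starProjection_apply_le V' y
      _ ≤ ‖X.starProjection (V'.starProjection y)‖ := hU y hy
      _ = ‖X.starProjection (T (T.adjoint (V'.starProjection y)))‖ := by
          rw [apply_adjoint_apply_of_mem_range hT (hproj y)]
      _ ≤ _ := norm_starProjection_apply_le_norm_starProjection_map_adjoint hT X _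

end LinearMap

lemma exists_finrank_le_singValN_mul_norm_le_starProjection_map_adjoint {n k : ℕ}
    {T : EuclideanSpace 𝕜 (Fin k) →ₗ[𝕜] EuclideanSpace 𝕜 (Fin n)}
    (hT : T.adjoint ∘ₗ T = LinearMap.id) {X V' : Submodule 𝕜 (EuclideanSpace 𝕜 (Fin n))}
    (hV' : V' ≤ LinearMap.range T) {i : ℕ} (hi : 0 < singValN (projMat X * projMat V') i) :
    ∃ U : Submodule 𝕜 (EuclideanSpace 𝕜 (Fin k)), i + 1 ≤ finrank 𝕜 U ∧
      U ≤ V'.map T.adjoint ∧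
      ∀ x ∈ U,
        singValN (projMat X * projMat V') i * ‖x‖ ≤ ‖(X.map T.adjoint).starProjection x‖ := by
  have hin : i < n := by
    by_contra h
    simp [singValN, h] at hi
  obtain ⟨U, hU, hsU⟩ := exists_finrank_eq_singValN_mul_norm_le (projMat X * projMat V') hin
  simp only [toEuclideanLin_projMat_mul_projMat_apply] at hsU
  rw [← hU]
  exact LinearMap.exists_finrank_le_mul_norm_le_norm_starProjection_map_adjoint hT hV' hi hsU

theorem stmt4_general {n k j : ℕ} (V : Matrix (Fin n) (Fin k) 𝕜) (hV : Vᴴ * V = 1)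
    (V' X : Submodule 𝕜 (EuclideanSpace 𝕜 (Fin n)))
    (hVr : V' ≤ LinearMap.range (Matrix.toEuclideanLin V))
    (hang : ∀ i < j, principalAngle X V' i < Real.pi / 2) :
    j ≤ Module.finrank 𝕜 (Submodule.map (Matrix.toEuclideanLin Vᴴ) X) ∧
      ∀ i < j,
        principalAngle (Submodule.map (Matrix.toEuclideanLin Vᴴ) X)
            (Submodule.map (Matrix.toEuclideanLin Vᴴ) V') i ≤ principalAngle X V' i := by
  have hT : (toEuclideanLin V).adjoint ∘ₗ toEuclideanLin V = LinearMap.id := by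
    rw [← toEuclideanLin_conjTranspose_eq_adjoint, ← toLpLin_mul_same, hV, toLpLin_one]
  rw [toEuclideanLin_conjTranspose_eq_adjoint]
  have hs : ∀ i < j, 0 < singValN (projMat X * projMat V') i :=
    fun i hi ↦ Real.arccos_lt_pi_div_two.mp (hang i hi)
  refine ⟨?_, fun i hi ↦ ?_⟩
  · rcases j.eq_zero_or_pos with rfl | hj
    · exact Nat.zero_le _
    obtain ⟨U, hU, -, hsU⟩ := exists_finrank_le_singValN_mul_norm_le_starProjection_map_adjoint
      hT hVr (hs (j - 1) (by omega))
    have := Submodule.finrank_le_finrank_of_mul_norm_le _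
      (fun x _ ↦ starProjection_apply_mem _ x) (hs (j - 1) (by omega)) hsU
    omega
  · obtain ⟨U, hU, hUH, hsU⟩ :=
      exists_finrank_le_singValN_mul_norm_le_starProjection_map_adjoint hT hVr (hs i hi)
    refine Real.arccos_le_arccos (le_singValN_of_forall_mul_norm_le _ hU (hs i hi).le
      fun x hx ↦ ?_)
    rw [toEuclideanLin_projMat_mul_projMat_apply, starProjection_eq_self_iff.mpr (hUH hx)]
    exact hsU x hx

theorem stmt4 {n k j : ℕ} (V : Matrix (Fin n) (Fin k) 𝕜) (hV : Vᴴ * V = 1)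
    (V' X : Submodule 𝕜 (EuclideanSpace 𝕜 (Fin n)))
    (hdim : Module.finrank 𝕜 V' = j) (hdX : j ≤ Module.finrank 𝕜 X)
    (hVr : V' ≤ LinearMap.range (Matrix.toEuclideanLin V))
    (hang : ∀ i < j, principalAngle X V' i < Real.pi / 2) :
    j ≤ Module.finrank 𝕜 (Submodule.map (Matrix.toEuclideanLin Vᴴ) X) ∧
      ∀ i < j,
        principalAngle (Submodule.map (Matrix.toEuclideanLin Vᴴ) X)
            (Submodule.map (Matrix.toEuclideanLin Vᴴ) V') i ≤ principalAngle X V' i :=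
  stmt4_general V hV V' X hVr hang
end

section
/- Let T', T'' ⊆ K^k be mutually orthogonal subspaces and H', H'' ⊆ K^k be mutually orthogonal subspaces with dim H' ≤ dim T' and dim H'' ≤ dim T''. Let T = T' ⊕ T'' and H = H' ⊕ H''. Then ‖(I − P_T) P_H‖ ≤ 2 (‖(I − P_{T'}) P_{H'}‖ + ‖(I − P_{T''}) P_{H''}‖), where ‖·‖ is the spectral norm; the same inequality holds for the Frobenius norm. -/
/-! Write `P_S` for `projMat S` and `T = T' ⊔ T''`. Since `T' ≤ T`, we have
`P_{Tᗮ} = P_{Tᗮ} P_{T'ᗮ}`, and likewise for `T''`; since `H' ⟂ H''`, `P_H = P_{H'} + P_{H''}`. Hence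
`(I - P_T) P_H = P_{Tᗮ} ((I - P_{T'}) P_{H'}) + P_{Tᗮ} ((I - P_{T''}) P_{H''})`. Any norm that is
subadditive and does not grow under left multiplication by an orthogonal projection (a contraction),
such as the spectral and the Frobenius norm, is therefore at most the sum of its values on
`(I - P_{T'}) P_{H'}` and `(I - P_{T''}) P_{H''}`. -/

open Matrix Submodule

variable {𝕜 : Type*} [RCLike 𝕜]

theorem Submodule.IsOrtho.starProjection_sup {E : Type*} [NormedAddCommGroup E]
    [InnerProductSpace 𝕜 E] {U V : Submodule 𝕜 E} [U.HasOrthogonalProjection]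
    [V.HasOrthogonalProjection] [(U ⊔ V).HasOrthogonalProjection] (h : U ⟂ V) :
    (U ⊔ V).starProjection = U.starProjection + V.starProjection := by
  ext x
  refine eq_starProjection_of_mem_orthogonal
    (add_mem (mem_sup_left (U.starProjection_apply_mem x))
      (mem_sup_right (V.starProjection_apply_mem x))) ?_
  rw [← inf_orthogonal, _root_.add_apply, ← sub_sub]
  refine ⟨sub_mem (sub_starProjection_mem_orthogonal x) (h.symm.le (V.starProjection_apply_mem x)),
    ?_⟩
  rw [sub_right_comm]
  exact sub_mem (sub_starProjection_mem_orthogonal x) (h.le (U.starProjection_apply_mem x))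

section projMat

variable {n : ℕ}

theorem toEuclideanCLM_projMat (S : Submodule 𝕜 (EuclideanSpace 𝕜 (Fin n))) :
    toEuclideanCLM (𝕜 := 𝕜) (n := Fin n) (projMat S) = S.starProjection := by
  rw [← ContinuousLinearMap.coe_inj, coe_toEuclideanCLM_eq_toEuclideanLin, projMat,
    LinearEquiv.apply_symm_apply]
  rfl

theorem projMat_orthogonal (S : Submodule 𝕜 (EuclideanSpace 𝕜 (Fin n))) :
    projMat Sᗮ = 1 - projMat S :=
  EquivLike.injective (toEuclideanCLM (𝕜 := 𝕜) (n := Fin n)) <| by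
    rw [map_sub, map_one, toEuclideanCLM_projMat, toEuclideanCLM_projMat,
      starProjection_orthogonal']

theorem projMat_mul_projMat_of_le {U V : Submodule 𝕜 (EuclideanSpace 𝕜 (Fin n))} (h : U ≤ V) :
    projMat U * projMat V = projMat U :=
  EquivLike.injective (toEuclideanCLM (𝕜 := 𝕜) (n := Fin n)) <| by
    rw [map_mul, toEuclideanCLM_projMat, toEuclideanCLM_projMat, ContinuousLinearMap.mul_def,
      starProjection_comp_starProjection_of_le h]

theorem projMat_sup_of_isOrtho {U V : Submodule 𝕜 (EuclideanSpace 𝕜 (Fin n))} (h : U ⟂ V) :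
    projMat (U ⊔ V) = projMat U + projMat V :=
  EquivLike.injective (toEuclideanCLM (𝕜 := 𝕜) (n := Fin n)) <| by
    rw [map_add, toEuclideanCLM_projMat, toEuclideanCLM_projMat, toEuclideanCLM_projMat,
      h.starProjection_sup]

theorem projMat_orthogonal_sup_mul_projMat_sup (T' T'' : Submodule 𝕜 (EuclideanSpace 𝕜 (Fin n)))
    {H' H'' : Submodule 𝕜 (EuclideanSpace 𝕜 (Fin n))} (hH : H' ⟂ H'') :
    projMat (T' ⊔ T'')ᗮ * projMat (H' ⊔ H'') =
      projMat (T' ⊔ T'')ᗮ * (projMat T'ᗮ * projMat H') +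
        projMat (T' ⊔ T'')ᗮ * (projMat T''ᗮ * projMat H'') := by
  rw [← mul_assoc, ← mul_assoc,
    projMat_mul_projMat_of_le (V := T'ᗮ) (orthogonal_le le_sup_left),
    projMat_mul_projMat_of_le (V := T''ᗮ) (orthogonal_le le_sup_right),
    projMat_sup_of_isOrtho hH, mul_add]

end projMat

section specNorm

open scoped Matrix.Norms.L2Operator

variable {m n p : ℕ}

theorem specNorm_eq_l2_opNorm (A : Matrix (Fin m) (Fin n) 𝕜) : specNorm A = ‖A‖ := rfl

theorem specNorm_nonneg (A : Matrix (Fin m) (Fin n) 𝕜) : 0 ≤ specNorm A := norm_nonneg _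

theorem specNorm_add_le (A B : Matrix (Fin m) (Fin n) 𝕜) :
    specNorm (A + B) ≤ specNorm A + specNorm B :=
  norm_add_le A B

theorem specNorm_mul_le (A : Matrix (Fin m) (Fin n) 𝕜) (B : Matrix (Fin n) (Fin p) 𝕜) :
    specNorm (A * B) ≤ specNorm A * specNorm B :=
  l2_opNorm_mul A B

theorem norm_toLp_mulVec_le (A : Matrix (Fin m) (Fin n) 𝕜) (v : Fin n → 𝕜) :
    ‖WithLp.toLp 2 (A *ᵥ v)‖ ≤ specNorm A * ‖WithLp.toLp 2 v‖ :=
  l2_opNorm_mulVec A (WithLp.toLp 2 v)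

theorem specNorm_projMat_le_one (S : Submodule 𝕜 (EuclideanSpace 𝕜 (Fin n))) :
    specNorm (projMat S) ≤ 1 := by
  rw [specNorm_eq_l2_opNorm, cstar_norm_def, toEuclideanCLM_projMat]
  exact S.starProjection_norm_le

theorem specNorm_projMat_mul_le (S : Submodule 𝕜 (EuclideanSpace 𝕜 (Fin m)))
    (A : Matrix (Fin m) (Fin n) 𝕜) : specNorm (projMat S * A) ≤ specNorm A :=
  (specNorm_mul_le _ _).trans <|
    mul_le_of_le_one_left (specNorm_nonneg A) (specNorm_projMat_le_one S)

end specNorm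

section frobNorm

variable {m n p : ℕ}

section

attribute [local instance] Matrix.frobeniusSeminormedAddCommGroup

theorem frobNorm_eq_frobenius_norm (A : Matrix (Fin m) (Fin n) 𝕜) : frobNorm A = ‖A‖ := by
  rw [frobenius_norm_def, frobNorm, Real.sqrt_eq_rpow]
  simp_rw [Real.rpow_two]

theorem frobNorm_add_le (A B : Matrix (Fin m) (Fin n) 𝕜) :
    frobNorm (A + B) ≤ frobNorm A + frobNorm B := by
  simp only [frobNorm_eq_frobenius_norm]
  exact norm_add_le A B

end

theorem frobNorm_nonneg (A : Matrix (Fin m) (Fin n) 𝕜) : 0 ≤ frobNorm A := Real.sqrt_nonneg _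

theorem frobNorm_sq_eq_sum_norm_sq_col (A : Matrix (Fin m) (Fin n) 𝕜) :
    frobNorm A ^ 2 = ∑ j, ‖WithLp.toLp 2 (Aᵀ j)‖ ^ 2 := by
  rw [frobNorm, Real.sq_sqrt (by positivity), Finset.sum_comm]
  simp [EuclideanSpace.norm_sq_eq]

theorem frobNorm_mul_le_specNorm_mul (A : Matrix (Fin m) (Fin n) 𝕜)
    (B : Matrix (Fin n) (Fin p) 𝕜) : frobNorm (A * B) ≤ specNorm A * frobNorm B := by
  refine (pow_le_pow_iff_left₀ (frobNorm_nonneg _)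
    (mul_nonneg (specNorm_nonneg A) (frobNorm_nonneg B)) two_ne_zero).1 ?_
  calc frobNorm (A * B) ^ 2 = ∑ j, ‖WithLp.toLp 2 (A *ᵥ Bᵀ j)‖ ^ 2 :=
        frobNorm_sq_eq_sum_norm_sq_col _
    _ ≤ ∑ j, (specNorm A * ‖WithLp.toLp 2 (Bᵀ j)‖) ^ 2 := by
        gcongr with j
        exact norm_toLp_mulVec_le A _
    _ = (specNorm A * frobNorm B) ^ 2 := by
        simp only [mul_pow, frobNorm_sq_eq_sum_norm_sq_col, Finset.mul_sum]

theorem frobNorm_projMat_mul_le (S : Submodule 𝕜 (EuclideanSpace 𝕜 (Fin m)))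
    (A : Matrix (Fin m) (Fin n) 𝕜) : frobNorm (projMat S * A) ≤ frobNorm A :=
  (frobNorm_mul_le_specNorm_mul _ _).trans <|
    mul_le_of_le_one_left (frobNorm_nonneg A) (specNorm_projMat_le_one S)

end frobNorm

theorem apply_one_sub_projMat_sup_mul_projMat_sup_le {n : ℕ} {N : Matrix (Fin n) (Fin n) 𝕜 → ℝ}
    (hN_add : ∀ A B, N (A + B) ≤ N A + N B) (hN_proj : ∀ S A, N (projMat S * A) ≤ N A)
    (T' T'' : Submodule 𝕜 (EuclideanSpace 𝕜 (Fin n)))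
    {H' H'' : Submodule 𝕜 (EuclideanSpace 𝕜 (Fin n))} (hH : H' ⟂ H'') :
    N ((1 - projMat (T' ⊔ T'')) * projMat (H' ⊔ H'')) ≤
      N ((1 - projMat T') * projMat H') + N ((1 - projMat T'') * projMat H'') := by
  simp only [← projMat_orthogonal]
  rw [projMat_orthogonal_sup_mul_projMat_sup T' T'' hH]
  exact (hN_add _ _).trans (add_le_add (hN_proj _ _) (hN_proj _ _))

theorem stmt6_general {k : ℕ} (T' T'' H' H'' : Submodule 𝕜 (EuclideanSpace 𝕜 (Fin k)))
    (hHperp : H' ≤ H''ᗮ) :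
    specNorm ((1 - projMat (T' ⊔ T'')) * projMat (H' ⊔ H'')) ≤
      2 * (specNorm ((1 - projMat T') * projMat H') +
        specNorm ((1 - projMat T'') * projMat H'')) ∧
    frobNorm ((1 - projMat (T' ⊔ T'')) * projMat (H' ⊔ H'')) ≤
      2 * (frobNorm ((1 - projMat T') * projMat H') +
        frobNorm ((1 - projMat T'') * projMat H'')) := by
  have hH : H' ⟂ H'' := isOrtho_iff_le.mpr hHperp
  refine ⟨?_, ?_⟩
  · refine (apply_one_sub_projMat_sup_mul_projMat_sup_le specNorm_add_le specNorm_projMat_mul_le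
      T' T'' hH).trans (le_mul_of_one_le_left ?_ one_le_two)
    exact add_nonneg (specNorm_nonneg _) (specNorm_nonneg _)
  · refine (apply_one_sub_projMat_sup_mul_projMat_sup_le frobNorm_add_le frobNorm_projMat_mul_le
      T' T'' hH).trans (le_mul_of_one_le_left ?_ one_le_two)
    exact add_nonneg (frobNorm_nonneg _) (frobNorm_nonneg _)

theorem stmt6 {k : ℕ} (T' T'' H' H'' : Submodule 𝕜 (EuclideanSpace 𝕜 (Fin k)))
    (hTperp : T' ≤ T''ᗮ) (hHperp : H' ≤ H''ᗮ)
    (h1 : Module.finrank 𝕜 H' ≤ Module.finrank 𝕜 T')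
    (h2 : Module.finrank 𝕜 H'' ≤ Module.finrank 𝕜 T'') :
    specNorm ((1 - projMat (T' ⊔ T'')) * projMat (H' ⊔ H'')) ≤
      2 * (specNorm ((1 - projMat T') * projMat H') +
        specNorm ((1 - projMat T'') * projMat H'')) ∧
    frobNorm ((1 - projMat (T' ⊔ T'')) * projMat (H' ⊔ H'')) ≤
      2 * (frobNorm ((1 - projMat T') * projMat H') +
        frobNorm ((1 - projMat T'') * projMat H'')) :=
  stmt6_general T' T'' H' H'' hHperp
end

section
/- Let B ∈ K^{p×q} and C ∈ K^{q×r} with V = range(C), and suppose V ⊆ (ker B)^⊥. Then (BC)† = C† (B P_V)†, where † denotes the Moore–Penrose pseudoinverse and P_V is the orthogonal projection onto V. -/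
open Matrix Submodule

variable {𝕜 : Type*} [RCLike 𝕜]

/-! Let P = C C†, the orthogonal projection onto V, and A = B P. The crux is A† A = P.
Since A P = A, the projection E = A† A satisfies E P = E, hence P E = E on taking adjoints;
and B P (1 - E) = A (1 - E) = 0 forces P (1 - E) = 0, because V meets ker B only in 0.
Then (B C)(C† A†) = A A† and (C† A†)(B C) = C† P C = C† C are Hermitian, the remaining
Penrose conditions follow, and uniqueness of the pseudoinverse gives (B C)† = C† A†. -/

theorem projMat_range_toEuclideanLin {n : ℕ} {P : Matrix (Fin n) (Fin n) 𝕜}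
    (hP : P.IsHermitian) (hPP : IsIdempotentElem P) :
    projMat (LinearMap.range (toEuclideanLin P)) = P := by
  have hsym : (toEuclideanLin P).IsSymmetricProjection :=
    ⟨hPP.map (toLpLinAlgEquiv 2), isSymmetric_toEuclideanLin_iff.mpr hP⟩
  obtain ⟨_, h⟩ := LinearMap.isSymmetricProjection_iff_eq_coe_starProjection_range.mp hsym
  rw [projMat, LinearEquiv.symm_apply_eq]
  exact h.symm

theorem Matrix.mul_eq_zero_of_range_le_orthogonal_ker {l m n o : Type*} [Fintype m] [Fintype n]
    [Fintype o] [DecidableEq m] [DecidableEq n] [DecidableEq o]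
    {B : Matrix l m 𝕜} {C : Matrix m n 𝕜} {N : Matrix n o 𝕜}
    (hV : LinearMap.range (toEuclideanLin C) ≤ (LinearMap.ker (toEuclideanLin B))ᗮ)
    (h : B * C * N = 0) : C * N = 0 := by
  refine toEuclideanLin.injective (LinearMap.ext fun x => ?_)
  have hrange : toEuclideanLin (C * N) x ∈ LinearMap.range (toEuclideanLin C) := by
    simp
  have hker : toEuclideanLin (C * N) x ∈ LinearMap.ker (toEuclideanLin B) := by
    simpa [Matrix.mul_assoc] using congr(toEuclideanLin $h x)
  simpa using (orthogonal_disjoint _).symm.le_bot ⟨hV hrange, hker⟩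

namespace IsMoorePenrose

variable {m n : ℕ} {A : Matrix (Fin m) (Fin n) 𝕜} {X : Matrix (Fin n) (Fin m) 𝕜}

theorem isHermitian_mul (h : IsMoorePenrose A X) : (A * X).IsHermitian := h.2.2.1

theorem isIdempotentElem_mul (h : IsMoorePenrose A X) : IsIdempotentElem (A * X) := by
  rw [IsIdempotentElem, ← Matrix.mul_assoc, h.1]

theorem range_toEuclideanLin_mul (h : IsMoorePenrose A X) :
    LinearMap.range (toEuclideanLin (A * X)) = LinearMap.range (toEuclideanLin A) := by
  refine le_antisymm ?_ ?_
  · rw [toLpLin_mul_same]; exact LinearMap.range_comp_le_range _ _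
  · conv_lhs => rw [← h.1, toLpLin_mul_same]
    exact LinearMap.range_comp_le_range _ _

theorem projMat_range (h : IsMoorePenrose A X) :
    projMat (LinearMap.range (toEuclideanLin A)) = A * X := by
  rw [← h.range_toEuclideanLin_mul]
  exact projMat_range_toEuclideanLin h.isHermitian_mul h.isIdempotentElem_mul

theorem eq {Y : Matrix (Fin n) (Fin m) 𝕜} (hX : IsMoorePenrose A X) (hY : IsMoorePenrose A Y) :
    X = Y := by
  obtain ⟨hAXA, hXAX, hAX, hXA⟩ := hX
  obtain ⟨hAYA, hYAY, hAY, hYA⟩ := hY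
  have hX : X = X * A * Y :=
    calc X = X * (A * Y * A * X)ᴴ := by rw [hAYA, hAX, ← Matrix.mul_assoc, hXAX]
      _ = X * (A * Y * (A * X))ᴴ := by simp only [Matrix.mul_assoc]
      _ = X * A * X * (A * Y) := by rw [conjTranspose_mul, hAX, hAY]; simp only [Matrix.mul_assoc]
      _ = X * A * Y := by rw [hXAX, Matrix.mul_assoc]
  have hY : Y = X * A * Y :=
    calc Y = (Y * (A * X * A))ᴴ * Y := by rw [hAXA, hYA, hYAY]
      _ = (Y * A * (X * A))ᴴ * Y := by simp only [Matrix.mul_assoc]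
      _ = X * A * (Y * A * Y) := by rw [conjTranspose_mul, hXA, hYA]; simp only [Matrix.mul_assoc]
      _ = X * A * Y := by rw [hYAY]
  exact hX.trans hY.symm

variable {p q r : ℕ} {B : Matrix (Fin p) (Fin q) 𝕜} {C : Matrix (Fin q) (Fin r) 𝕜}
  {Cd : Matrix (Fin r) (Fin q) 𝕜} {BPd : Matrix (Fin q) (Fin p) 𝕜}

theorem mul_self_eq_of_range_le_orthogonal_ker
    (hV : LinearMap.range (toEuclideanLin C) ≤ (LinearMap.ker (toEuclideanLin B))ᗮ)
    (h1 : IsMoorePenrose C Cd) (h2 : IsMoorePenrose (B * (C * Cd)) BPd) :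
    BPd * (B * (C * Cd)) = C * Cd := by
  have hEP : BPd * (B * (C * Cd)) * (C * Cd) = BPd * (B * (C * Cd)) := by
    rw [Matrix.mul_assoc, Matrix.mul_assoc, h1.isIdempotentElem_mul.eq]
  have hPE : C * Cd * (BPd * (B * (C * Cd))) = BPd * (B * (C * Cd)) := by
    have := congr($hEP ᴴ)
    rwa [conjTranspose_mul, h1.isHermitian_mul.eq, h2.2.2.2] at this
  have hP_one_sub : C * (Cd * (1 - BPd * (B * (C * Cd)))) = 0 := by
    refine mul_eq_zero_of_range_le_orthogonal_ker hV ?_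
    rw [← Matrix.mul_assoc, Matrix.mul_assoc B, Matrix.mul_sub, Matrix.mul_one,
      ← Matrix.mul_assoc (B * (C * Cd)) BPd, h2.1, sub_self]
  rw [← Matrix.mul_assoc, mul_sub, mul_one, sub_eq_zero, hPE] at hP_one_sub
  exact hP_one_sub.symm

theorem mul_of_range_le_orthogonal_ker
    (hV : LinearMap.range (toEuclideanLin C) ≤ (LinearMap.ker (toEuclideanLin B))ᗮ)
    (h1 : IsMoorePenrose C Cd) (h2 : IsMoorePenrose (B * (C * Cd)) BPd) :
    IsMoorePenrose (B * C) (Cd * BPd) := by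
  have hBC : B * (C * Cd) * C = B * C := by rw [Matrix.mul_assoc, h1.1]
  have hleft : B * C * (Cd * BPd) = B * (C * Cd) * BPd := by simp only [Matrix.mul_assoc]
  have hright : Cd * BPd * (B * C) = Cd * C := by
    rw [← hBC, Matrix.mul_assoc Cd, ← Matrix.mul_assoc BPd,
      mul_self_eq_of_range_le_orthogonal_ker hV h1 h2, ← Matrix.mul_assoc, ← Matrix.mul_assoc,
      h1.2.1]
  refine ⟨?_, ?_, ?_, ?_⟩
  · rw [hleft, ← hBC, ← Matrix.mul_assoc, h2.1]
  · rw [hright, ← Matrix.mul_assoc, h1.2.1]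
  · rw [hleft]; exact h2.2.2.1
  · rw [hright]; exact h1.2.2.2

end IsMoorePenrose

theorem stmt7 {p q r : ℕ} (B : Matrix (Fin p) (Fin q) 𝕜) (C : Matrix (Fin q) (Fin r) 𝕜)
    (hV : LinearMap.range (Matrix.toEuclideanLin C) ≤
      (LinearMap.ker (Matrix.toEuclideanLin B))ᗮ)
    (Cd : Matrix (Fin r) (Fin q) 𝕜) (BPd : Matrix (Fin q) (Fin p) 𝕜)
    (BCd : Matrix (Fin r) (Fin p) 𝕜)
    (h1 : IsMoorePenrose C Cd)
    (h2 : IsMoorePenrose (B * projMat (LinearMap.range (Matrix.toEuclideanLin C))) BPd)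
    (h3 : IsMoorePenrose (B * C) BCd) :
    BCd = Cd * BPd := by
  rw [h1.projMat_range] at h2
  exact h3.eq (IsMoorePenrose.mul_of_range_le_orthogonal_ker hV h1 h2)
end

section
/- Let A ∈ K^{m×n} with singular values σ_1 ≥ … ≥ σ_p (p = min(m,n)), let 1 ≤ h ≤ rank(A) with σ_h = σ_{h+1}. Define j = max{ 0 ≤ ℓ < h : σ_ℓ > σ_h } (with σ_0 = ∞) and k = max{ 1 ≤ ℓ ≤ rank(A) : σ_ℓ = σ_h }. Fix a SVD A = UΣV* and let U_ℓ = span of the first ℓ columns of U (U_0 = {0}). Then an h-dimensional subspace S' ⊆ K^m is a left dominant subspace for A if and only if there exists an (h−j)-dimensional subspace 𝒰 ⊆ U_k ∩ U_j^⊥ such that S' = U_j ⊕ 𝒰. -/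
open Matrix Submodule

variable {𝕜 : Type*} [RCLike 𝕜]

noncomputable def colSpan {m mm : ℕ} (U : Matrix (Fin m) (Fin mm) 𝕜) (ℓ : ℕ) :
    Submodule 𝕜 (EuclideanSpace 𝕜 (Fin m)) :=
  Submodule.span 𝕜 {x | ∃ i : Fin mm, (i : ℕ) < ℓ ∧ x = fun r => U r i}

def IsLeftDominant {m n : ℕ} (A : Matrix (Fin m) (Fin n) 𝕜) (σ : ℕ → ℝ) (h : ℕ)
    (S' : Submodule 𝕜 (EuclideanSpace 𝕜 (Fin m))) : Prop :=
  ∃ w : Fin h → EuclideanSpace 𝕜 (Fin m),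
    Orthonormal 𝕜 w ∧ Submodule.span 𝕜 (Set.range w) = S' ∧
    ∀ i : Fin h,
      Matrix.toEuclideanLin (A * Aᴴ) (w i) = (algebraMap ℝ 𝕜 (σ ((i : ℕ) + 1) ^ 2)) • w i

def IsRightDominant {m n : ℕ} (A : Matrix (Fin m) (Fin n) 𝕜) (σ : ℕ → ℝ) (h : ℕ)
    (S : Submodule 𝕜 (EuclideanSpace 𝕜 (Fin n))) : Prop :=
  ∃ z : Fin h → EuclideanSpace 𝕜 (Fin n),
    Orthonormal 𝕜 z ∧ Submodule.span 𝕜 (Set.range z) = S ∧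
    ∀ i : Fin h,
      Matrix.toEuclideanLin (Aᴴ * A) (z i) = (algebraMap ℝ 𝕜 (σ ((i : ℕ) + 1) ^ 2)) • z i

/-! The columns `u₀, …, u_{m-1}` of `U` form an orthonormal eigenbasis of `A * Aᴴ`, with
eigenvalue `σ (i + 1) ^ 2` at `uᵢ` (and `0` for `i ≥ n`). The hypotheses on `j` and `k` say
exactly that this eigenvalue exceeds `σ h ^ 2` for `i < j`, equals it for `j ≤ i < k` and is
smaller for `i ≥ k`. Hence the `σ h ^ 2`-eigenspace is `U_k ⊓ U_jᗮ`, and every eigenvector for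
a larger eigenvalue lies in `U_j`. In a left dominant family `w`, the first `j` vectors are such
eigenvectors, so they span `U_j` by a dimension count, and the other `h - j` span a subspace `𝒰`
of the `σ h ^ 2`-eigenspace. Conversely, the first `j` columns of `U` followed by an orthonormal
basis of `𝒰` form a left dominant family. -/

open Module End

section FinAppend

variable {E : Type*} [NormedAddCommGroup E] [InnerProductSpace 𝕜 E] {p q : ℕ}

theorem Fin.range_append {α : Type*} (a : Fin p → α) (b : Fin q → α) :
    Set.range (Fin.append a b) = Set.range a ∪ Set.range b := by
  rw [← Set.Sum.elim_range, ← Fin.append_comp_sumElim]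
  exact (finSumFinEquiv.surjective.range_comp _).symm

theorem Orthonormal.fin_append {a : Fin p → E} {b : Fin q → E} (ha : Orthonormal 𝕜 a)
    (hb : Orthonormal 𝕜 b) (hab : ∀ i j, inner 𝕜 (a i) (b j) = 0) :
    Orthonormal 𝕜 (Fin.append a b) := by
  have hba : ∀ i j, inner 𝕜 (b j) (a i) = 0 := fun i j => inner_eq_zero_symm.mp (hab i j)
  rw [orthonormal_iff_ite]
  intro x y
  induction x using Fin.addCases <;> induction y using Fin.addCases <;>
    simp [orthonormal_iff_ite.mp ha, orthonormal_iff_ite.mp hb, hab, hba, Fin.ext_iff] <;> omega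

end FinAppend

theorem Module.Basis.eigenspace_eq_span_image {R M ι : Type*} [CommRing R] [NoZeroDivisors R]
    [AddCommGroup M] [Module R M] (b : Basis ι R M) {f : End R M} {d : ι → R}
    (hf : ∀ i, f (b i) = d i • b i) (μ : R) :
    eigenspace f μ = span R (b '' {i | d i = μ}) := by
  refine le_antisymm (fun x hx => ?_) (span_le.mpr ?_)
  · have hcoord : ∀ i, (b.coord i).comp f = d i • b.coord i := fun i =>
      b.ext fun k => by
        rcases eq_or_ne k i with rfl | hki
        · simp [hf]
        · simp [hf, hki]
    rw [b.mem_span_image, Finsupp.support_subset_iff]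
    intro i hi
    have h := LinearMap.congr_fun (hcoord i) x
    simp only [LinearMap.comp_apply, mem_eigenspace_iff.mp hx, LinearMap.smul_apply,
      LinearMap.map_smul, Basis.coord_apply, smul_eq_mul] at h
    exact (mul_eq_mul_right_iff.mp h).resolve_left (Ne.symm hi)
  · rintro - ⟨i, hi, rfl⟩
    exact mem_eigenspace_iff.mpr (hi ▸ hf i)

section OrthonormalBasis

variable {E ι : Type*} [NormedAddCommGroup E] [InnerProductSpace 𝕜 E] [Fintype ι]

theorem OrthonormalBasis.mem_span_image_iff (b : OrthonormalBasis ι 𝕜 E) {s : Set ι} {x : E} :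
    x ∈ span 𝕜 (b '' s) ↔ ∀ i ∉ s, inner 𝕜 (b i) x = 0 := by
  rw [← b.coe_toBasis, b.toBasis.mem_span_image, Finsupp.support_subset_iff]
  simp [OrthonormalBasis.repr_apply_apply]

theorem OrthonormalBasis.orthogonal_span_image (b : OrthonormalBasis ι 𝕜 E) (s : Set ι) :
    (span 𝕜 (b '' s))ᗮ = span 𝕜 (b '' sᶜ) := by
  refine le_antisymm (fun x hx => b.mem_span_image_iff.mpr fun i hi => ?_) ?_
  · exact hx _ (subset_span ⟨i, not_not.mp hi, rfl⟩)
  · rw [← isOrtho_iff_le, isOrtho_span]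
    rintro - ⟨i, hi, rfl⟩ - ⟨k, hk, rfl⟩
    exact b.orthonormal.2 fun hik => hi (hik ▸ hk)

theorem OrthonormalBasis.span_image_inf_orthogonal (b : OrthonormalBasis ι 𝕜 E) (s t : Set ι) :
    span 𝕜 (b '' s) ⊓ (span 𝕜 (b '' t))ᗮ = span 𝕜 (b '' (s \ t)) := by
  ext x
  simp only [mem_inf, b.orthogonal_span_image, b.mem_span_image_iff, Set.mem_sdiff,
    Set.mem_compl_iff]
  grind

end OrthonormalBasis

section Abstract

variable {E : Type*} [NormedAddCommGroup E] [InnerProductSpace 𝕜 E]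

theorem exists_orthonormal_eigenvectors_iff [FiniteDimensional 𝕜 E] {T : E →ₗ[𝕜] E}
    {j l : ℕ} {e : Fin j → E} {μ : ℕ → 𝕜} {c : 𝕜} (he : Orthonormal 𝕜 e)
    (hTe : ∀ i, T (e i) = μ i • e i)
    (hμe : ∀ i : Fin j, eigenspace T (μ i) ≤ span 𝕜 (Set.range e))
    (hμc : ∀ t < l, μ (j + t) = c) (hc : eigenspace T c ≤ (span 𝕜 (Set.range e))ᗮ)
    (S : Submodule 𝕜 E) :
    (∃ w : Fin (j + l) → E, Orthonormal 𝕜 w ∧ span 𝕜 (Set.range w) = S ∧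
        ∀ i : Fin (j + l), T (w i) = μ i • w i) ↔
      ∃ 𝒰 : Submodule 𝕜 E, finrank 𝕜 𝒰 = l ∧ 𝒰 ≤ eigenspace T c ∧
        S = span 𝕜 (Set.range e) ⊔ 𝒰 := by
  constructor
  · rintro ⟨w, hw, rfl, hTw⟩
    have hw₁ : span 𝕜 (Set.range (w ∘ Fin.castAdd l)) = span 𝕜 (Set.range e) := by
      refine Submodule.eq_of_le_of_finrank_eq (span_le.mpr ?_) ?_
      · rintro - ⟨i, rfl⟩
        refine hμe i (mem_eigenspace_iff.mpr ?_)
        simpa using hTw (Fin.castAdd l i)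
      · rw [finrank_span_eq_card (hw.comp _ (Fin.castAdd_injective j l)).linearIndependent,
          finrank_span_eq_card he.linearIndependent]
    refine ⟨span 𝕜 (Set.range (w ∘ Fin.natAdd j)), ?_, span_le.mpr ?_, ?_⟩
    · simp [finrank_span_eq_card (hw.comp _ (Fin.natAdd_injective l j)).linearIndependent]
    · rintro - ⟨t, rfl⟩
      rw [SetLike.mem_coe, mem_eigenspace_iff, ← hμc t t.isLt]
      simpa using hTw (Fin.natAdd j t)
    · rw [← hw₁, ← span_union, ← Fin.range_append]
      exact congrArg (fun f => span 𝕜 (Set.range f)) Fin.append_castAdd_natAdd.symm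
  · rintro ⟨𝒰, rfl, h𝒰, rfl⟩
    set v := stdOrthonormalBasis 𝕜 𝒰
    have hv : ∀ t, (v t : E) ∈ eigenspace T c := fun t => h𝒰 (v t).2
    refine ⟨Fin.append e (fun t => (v t : E)), he.fin_append ?_ ?_, ?_, ?_⟩
    · exact v.orthonormal.comp_linearIsometry 𝒰.subtypeₗᵢ
    · exact fun i t => hc (hv t) _ (subset_span ⟨i, rfl⟩)
    · have : span 𝕜 (Set.range fun t => (v t : E)) = 𝒰 := by
        rw [Set.range_comp' Subtype.val, ← 𝒰.coe_subtype, span_image]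
        rw [← v.coe_toBasis, v.toBasis.span_eq, map_subtype_top]
      rw [Fin.range_append, span_union, this]
    · intro i
      induction i using Fin.addCases with
      | left i => simpa using hTe i
      | right t => simpa [hμc t t.isLt] using mem_eigenspace_iff.mp (hv t)

end Abstract

section DiagonalOperator

variable {E : Type*} [NormedAddCommGroup E] [InnerProductSpace 𝕜 E]

theorem exists_orthonormal_eigenvectors_iff_of_orthonormalBasis {m j k l : ℕ}
    (b : OrthonormalBasis (Fin m) 𝕜 E) {T : E →ₗ[𝕜] E} {d μ : ℕ → ℝ} {c : ℝ}
    (hT : ∀ i : Fin m, T (b i) = algebraMap ℝ 𝕜 (d i) • b i)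
    (htop : ∀ i < j, c < d i) (hmid : ∀ i, j ≤ i → i < k → d i = c)
    (hlow : ∀ i, k ≤ i → d i < c) (hμ : ∀ i < j + l, μ i = d i) (hlk : j + l ≤ k)
    (hjm : j ≤ m) (S : Submodule 𝕜 E) :
    (∃ w : Fin (j + l) → E, Orthonormal 𝕜 w ∧ span 𝕜 (Set.range w) = S ∧
        ∀ i : Fin (j + l), T (w i) = algebraMap ℝ 𝕜 (μ i) • w i) ↔
      ∃ 𝒰 : Submodule 𝕜 E, finrank 𝕜 𝒰 = l ∧
        𝒰 ≤ span 𝕜 (b '' {i | (i : ℕ) < k}) ⊓ (span 𝕜 (b '' {i | (i : ℕ) < j}))ᗮ ∧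
        S = span 𝕜 (b '' {i | (i : ℕ) < j}) ⊔ 𝒰 := by
  have heig (x : ℝ) : eigenspace T (algebraMap ℝ 𝕜 x) = span 𝕜 (b '' {i | d i = x}) := by
    rw [← b.coe_toBasis, b.toBasis.eigenspace_eq_span_image (by simpa using hT)]
    simp [(algebraMap ℝ 𝕜).injective.eq_iff]
  have hc : eigenspace T (algebraMap ℝ 𝕜 c) =
      span 𝕜 (b '' {i | (i : ℕ) < k}) ⊓ (span 𝕜 (b '' {i | (i : ℕ) < j}))ᗮ := by
    rw [heig, b.span_image_inf_orthogonal]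
    congr 2
    ext i
    simp only [Set.mem_ofPred_eq, Set.mem_sdiff, not_lt]
    exact ⟨fun hi => ⟨lt_of_not_ge fun hki => (hlow i hki).ne hi,
      le_of_not_gt fun hij => (htop i hij).ne' hi⟩, fun hi => hmid i hi.2 hi.1⟩
  have hspan : span 𝕜 (b '' {i | (i : ℕ) < j}) = span 𝕜 (Set.range (b ∘ Fin.castLE hjm)) := by
    congr 1
    ext x
    simp [Set.range_comp]
  have : FiniteDimensional 𝕜 E := b.toBasis.finiteDimensional_of_finite
  rw [← hc, hspan]
  refine exists_orthonormal_eigenvectors_iff (μ := fun i => algebraMap ℝ 𝕜 (μ i))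
    (b.orthonormal.comp _ (Fin.castLE_injective hjm)) ?_ ?_ ?_ ?_ S
  · intro i
    simp [hT, hμ i (by omega)]
  · intro i
    rw [heig, ← hspan]
    refine span_mono (Set.image_mono fun i' hi' => ?_)
    have hgt : c < d i' := by rw [Set.mem_ofPred_eq.mp hi', hμ i (by omega)]; exact htop i i.isLt
    refine lt_of_not_ge fun (hji : j ≤ (i' : ℕ)) => ?_
    rcases lt_or_ge (i' : ℕ) k with hik | hki
    · exact hgt.ne' (hmid i' hji hik)
    · exact (hlow i' hki).not_gt hgt
  · intro t ht
    rw [hμ _ (by omega), hmid _ (by omega) (by omega)]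
  · rw [hc, ← hspan]
    exact inf_le_right

end DiagonalOperator

namespace Matrix

variable {m n : ℕ}

noncomputable def euclideanCol {ι : Type*} (U : Matrix (Fin m) ι 𝕜) (i : ι) :
    EuclideanSpace 𝕜 (Fin m) :=
  WithLp.toLp 2 (fun r => U r i)

theorem colSpan_eq_span_image {mm : ℕ} (U : Matrix (Fin m) (Fin mm) 𝕜) (ℓ : ℕ) :
    colSpan U ℓ = span 𝕜 (U.euclideanCol '' {i | (i : ℕ) < ℓ}) := by
  unfold colSpan euclideanCol
  congr 1
  ext x
  simp [WithLp.ext_iff, eq_comm]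

theorem orthonormal_euclideanCol {ι : Type*} [Fintype ι] [DecidableEq ι]
    {U : Matrix (Fin m) ι 𝕜} (hU : Uᴴ * U = 1) : Orthonormal 𝕜 U.euclideanCol := by
  rw [orthonormal_iff_ite]
  intro a b
  rw [← one_apply, ← hU, mul_apply, euclideanCol, euclideanCol, EuclideanSpace.inner_toLp_toLp,
    dotProduct]
  simp [mul_comm]

theorem exists_orthonormalBasis_euclideanCol {U : Matrix (Fin m) (Fin m) 𝕜} (hU : Uᴴ * U = 1) :
    ∃ b : OrthonormalBasis (Fin m) 𝕜 (EuclideanSpace 𝕜 (Fin m)), ⇑b = U.euclideanCol :=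
  have hon := orthonormal_euclideanCol hU
  ⟨.mk hon (hon.linearIndependent.span_eq_top_of_card_eq_finrank' (by simp)).ge,
    OrthonormalBasis.coe_mk _ _⟩

theorem toEuclideanLin_euclideanCol_of_mul_eq {M U : Matrix (Fin m) (Fin m) 𝕜} {d : Fin m → 𝕜}
    (h : M * U = U * diagonal d) (i : Fin m) :
    toEuclideanLin M (U.euclideanCol i) = d i • U.euclideanCol i := by
  ext r
  have := congrFun (congrFun h r) i
  rw [mul_diagonal, mul_apply] at this
  simp [euclideanCol, mulVec, dotProduct, this, mul_comm]

theorem mul_conjTranspose_eq_diagonal {Sig : Matrix (Fin m) (Fin n) 𝕜} {s : ℕ → ℝ}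
    (hSig : ∀ i jj, Sig i jj = if (i : ℕ) = jj then algebraMap ℝ 𝕜 (s i) else 0) :
    Sig * Sigᴴ = diagonal fun i : Fin m => algebraMap ℝ 𝕜 (if (i : ℕ) < n then s i ^ 2 else 0) := by
  ext x y
  simp only [mul_apply, hSig, conjTranspose_apply, RCLike.star_def, ite_mul, zero_mul,
    diagonal_apply]
  rcases eq_or_ne x y with rfl | hxy
  · by_cases hx : (x : ℕ) < n
    · rw [Finset.sum_eq_single ⟨x, hx⟩ (fun jj _ hjj => if_neg fun h => hjj (Fin.ext h.symm))
        (by simp)]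
      simp [hx, sq, ← map_mul]
    · rw [if_pos rfl, if_neg hx, map_zero]
      refine Finset.sum_eq_zero fun jj _ => ?_
      grind
  · rw [if_neg hxy]
    refine Finset.sum_eq_zero fun jj _ => ?_
    grind

theorem mul_conjTranspose_mul_eq_of_eq_mul_mul {A Sig : Matrix (Fin m) (Fin n) 𝕜}
    {U : Matrix (Fin m) (Fin m) 𝕜} {V : Matrix (Fin n) (Fin n) 𝕜} (hU : Uᴴ * U = 1)
    (hV : Vᴴ * V = 1) (hA : A = U * Sig * Vᴴ) : A * Aᴴ * U = U * (Sig * Sigᴴ) := by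
  simp only [hA, conjTranspose_mul, conjTranspose_conjTranspose, Matrix.mul_assoc]
  rw [← Matrix.mul_assoc Vᴴ, hV, Matrix.one_mul, hU, Matrix.mul_one]

end Matrix

theorem Fin.lt_card_filter_iff_of_antitone {n : ℕ} {p : Fin n → Prop} [DecidablePred p]
    (hp : Antitone p) (i : Fin n) : (i : ℕ) < (Finset.univ.filter p).card ↔ p i := by
  constructor
  · intro hi
    by_contra hpi
    have : Finset.univ.filter p ⊆ Finset.Iio i := fun x hx => by
      simp only [Finset.mem_filter, Finset.mem_univ, true_and] at hx
      exact Finset.mem_Iio.mpr (lt_of_not_ge fun hix => hpi (hp hix hx))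
    have := Finset.card_le_card this
    rw [Fin.card_Iio] at this
    omega
  · intro hpi
    have : Finset.Iic i ⊆ Finset.univ.filter p := fun x hx =>
      Finset.mem_filter.mpr ⟨Finset.mem_univ x, hp (Finset.mem_Iic.mp hx) hpi⟩
    have := Finset.card_le_card this
    rw [Fin.card_Iic] at this
    omega

section SingularValues

variable {m n : ℕ} (A : Matrix (Fin m) (Fin n) 𝕜)

theorem singVal_nonneg (i : Fin n) : 0 ≤ singVal A i := Real.sqrt_nonneg _

theorem singVal_antitone : Antitone (singVal A) := fun _ _ hab =>
  Real.sqrt_le_sqrt <|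
    Tuple.monotone_sort (isHermitian_conjTranspose_mul_self A).eigenvalues (Fin.rev_le_rev.mpr hab)

open scoped ComplexOrder in
theorem card_filter_singVal_ne_zero :
    (Finset.univ.filter fun i => singVal A i ≠ 0).card = A.rank := by
  classical
  have hA := isHermitian_conjTranspose_mul_self A
  rw [← Fintype.card_subtype, ← rank_conjTranspose_mul_self, hA.rank_eq_card_non_zero_eigs]
  refine Fintype.card_congr (Equiv.subtypeEquiv (Fin.revPerm.trans (Tuple.sort hA.eigenvalues))
    fun i => ?_)
  simp [singVal, Real.sqrt_eq_zero ((posSemidef_conjTranspose_mul_self A).eigenvalues_nonneg _)]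

theorem singVal_ne_zero_iff (i : Fin n) : singVal A i ≠ 0 ↔ (i : ℕ) < A.rank := by
  classical
  rw [← card_filter_singVal_ne_zero, Fin.lt_card_filter_iff_of_antitone]
  intro a b hab hb
  exact ((lt_of_le_of_ne (singVal_nonneg A b) (Ne.symm hb)).trans_le (singVal_antitone A hab)).ne'

end SingularValues

section SingularValueSequence

variable {m n : ℕ} {A : Matrix (Fin m) (Fin n) 𝕜} {σ : ℕ → ℝ}

theorem eq_singVal_of_mem_Icc (hσ : ∀ i : Fin n, σ ((i : ℕ) + 1) = singVal A i) {ℓ : ℕ}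
    (hℓ : ℓ ∈ Set.Icc 1 n) : σ ℓ = singVal A ⟨ℓ - 1, by grind⟩ := by
  rw [← hσ]
  congr
  grind

theorem antitoneOn_of_eq_singVal (hσ : ∀ i : Fin n, σ ((i : ℕ) + 1) = singVal A i) :
    AntitoneOn σ (Set.Icc 1 n) := fun a ha b hb hab => by
  rw [eq_singVal_of_mem_Icc hσ ha, eq_singVal_of_mem_Icc hσ hb]
  exact singVal_antitone A (Fin.mk_le_mk.mpr (by omega))

theorem nonneg_of_eq_singVal (hσ : ∀ i : Fin n, σ ((i : ℕ) + 1) = singVal A i) {ℓ : ℕ}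
    (hℓ : ℓ ∈ Set.Icc 1 n) : 0 ≤ σ ℓ :=
  eq_singVal_of_mem_Icc hσ hℓ ▸ singVal_nonneg A _

theorem pos_iff_le_rank_of_eq_singVal (hσ : ∀ i : Fin n, σ ((i : ℕ) + 1) = singVal A i)
    {ℓ : ℕ} (hℓ : ℓ ∈ Set.Icc 1 n) : 0 < σ ℓ ↔ ℓ ≤ A.rank := by
  rw [(nonneg_of_eq_singVal hσ hℓ).lt_iff_ne', eq_singVal_of_mem_Icc hσ hℓ, singVal_ne_zero_iff]
  grind

end SingularValueSequence

theorem sq_cluster_trichotomy {σ : ℕ → ℝ} {n r h j k : ℕ} (hanti : AntitoneOn σ (Set.Icc 1 n))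
    (hnonneg : ∀ ℓ ∈ Set.Icc 1 n, 0 ≤ σ ℓ) (hpos : ∀ ℓ ∈ Set.Icc 1 n, 0 < σ ℓ ↔ ℓ ≤ r)
    (hrn : r ≤ n) (hh1 : 1 ≤ h) (hh2 : h ≤ r) (hjh : j ≤ h) (hj2 : j = 0 ∨ σ h < σ j)
    (hj3 : ∀ ℓ, ℓ < h → σ h < σ ℓ → ℓ ≤ j) (hk2 : k ≤ r) (hk3 : σ k = σ h)
    (hk4 : ∀ ℓ, 1 ≤ ℓ → ℓ ≤ r → σ ℓ = σ h → ℓ ≤ k) :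
    (∀ i < j, σ h ^ 2 < if i < n then σ (i + 1) ^ 2 else 0) ∧
      (∀ i, j ≤ i → i < k → (if i < n then σ (i + 1) ^ 2 else 0) = σ h ^ 2) ∧
      (∀ i, k ≤ i → (if i < n then σ (i + 1) ^ 2 else 0) < σ h ^ 2) := by
  have hhk : h ≤ k := hk4 h hh1 hh2 rfl
  have hσh : 0 < σ h := (hpos h ⟨hh1, by omega⟩).mpr hh2
  have top : ∀ ℓ, 1 ≤ ℓ → ℓ ≤ j → σ h < σ ℓ := fun ℓ h1 h2 => by
    rcases hj2 with rfl | hj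
    · omega
    · exact hj.trans_le (hanti ⟨h1, by omega⟩ ⟨by omega, by omega⟩ h2)
  have mid : ∀ ℓ, j < ℓ → ℓ ≤ k → σ ℓ = σ h := fun ℓ h1 h2 => by
    rcases lt_or_ge ℓ h with hℓh | hhℓ
    · refine le_antisymm (not_lt.mp fun hlt => absurd (hj3 ℓ hℓh hlt) (by omega)) ?_
      exact hanti ⟨by omega, by omega⟩ ⟨hh1, by omega⟩ hℓh.le
    · refine le_antisymm (hanti ⟨hh1, by omega⟩ ⟨by omega, by omega⟩ hhℓ) ?_
      exact hk3 ▸ hanti ⟨by omega, by omega⟩ ⟨by omega, by omega⟩ h2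
  have low : ∀ ℓ, k < ℓ → ℓ ≤ n → σ ℓ < σ h := fun ℓ h1 h2 => by
    refine lt_of_le_of_ne (hanti ⟨hh1, by omega⟩ ⟨by omega, h2⟩ (by omega)) fun heq => ?_
    have hℓr : ℓ ≤ r := (hpos ℓ ⟨by omega, h2⟩).mp (heq ▸ hσh)
    exact absurd (hk4 ℓ (by omega) hℓr heq) (by omega)
  refine ⟨fun i hi => ?_, fun i hi hik => ?_, fun i hki => ?_⟩
  · rw [if_pos (by omega)]
    exact pow_lt_pow_left₀ (top (i + 1) (by omega) hi) hσh.le two_ne_zero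
  · rw [if_pos (by omega), mid (i + 1) (by omega) hik]
  · split_ifs with hin
    · exact pow_lt_pow_left₀ (low (i + 1) (by omega) hin) (hnonneg _ ⟨by omega, hin⟩) two_ne_zero
    · positivity

theorem stmt13_general {m n : ℕ} (A : Matrix (Fin m) (Fin n) 𝕜) (σ : ℕ → ℝ)
    (hσ : ∀ i : Fin n, σ ((i : ℕ) + 1) = singVal A i)
    (h j k : ℕ) (hh1 : 1 ≤ h) (hh2 : h ≤ A.rank)
    (hj1 : j < h) (hj2 : j = 0 ∨ σ h < σ j)
    (hj3 : ∀ ℓ, ℓ < h → σ h < σ ℓ → ℓ ≤ j)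
    (hk2 : k ≤ A.rank) (hk3 : σ k = σ h)
    (hk4 : ∀ ℓ, 1 ≤ ℓ → ℓ ≤ A.rank → σ ℓ = σ h → ℓ ≤ k)
    (U : Matrix (Fin m) (Fin m) 𝕜) (V : Matrix (Fin n) (Fin n) 𝕜)
    (Sig : Matrix (Fin m) (Fin n) 𝕜)
    (hU : Uᴴ * U = 1) (hVu : Vᴴ * V = 1)
    (hSig : ∀ (i : Fin m) (jj : Fin n),
      Sig i jj = if (i : ℕ) = (jj : ℕ) then algebraMap ℝ 𝕜 (σ ((i : ℕ) + 1)) else 0)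
    (hA : A = U * Sig * Vᴴ)
    (S' : Submodule 𝕜 (EuclideanSpace 𝕜 (Fin m))) :
    IsLeftDominant A σ h S' ↔
      ∃ 𝒰 : Submodule 𝕜 (EuclideanSpace 𝕜 (Fin m)),
        Module.finrank 𝕜 𝒰 = h - j ∧ 𝒰 ≤ colSpan U k ⊓ (colSpan U j)ᗮ ∧
        S' = colSpan U j ⊔ 𝒰 := by
  have hrn : A.rank ≤ n := (rank_le_card_width A).trans_eq (Fintype.card_fin n)
  have hrm : A.rank ≤ m := (rank_le_card_height A).trans_eq (Fintype.card_fin m)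
  obtain ⟨htop, hmid, hlow⟩ := sq_cluster_trichotomy (antitoneOn_of_eq_singVal hσ)
    (fun _ => nonneg_of_eq_singVal hσ) (fun _ => pos_iff_le_rank_of_eq_singVal hσ) hrn hh1 hh2
    hj1.le hj2 hj3 hk2 hk3 hk4
  obtain ⟨b, hb⟩ := exists_orthonormalBasis_euclideanCol hU
  obtain ⟨l, rfl⟩ := Nat.exists_eq_add_of_le hj1.le
  have hT (i : Fin m) : toEuclideanLin (A * Aᴴ) (b i) =
      algebraMap ℝ 𝕜 (if (i : ℕ) < n then σ (i + 1) ^ 2 else 0) • b i := by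
    rw [hb]
    exact toEuclideanLin_euclideanCol_of_mul_eq (by
      rw [mul_conjTranspose_mul_eq_of_eq_mul_mul hU hVu hA,
        mul_conjTranspose_eq_diagonal (s := fun i => σ (i + 1)) hSig]) i
  rw [colSpan_eq_span_image, colSpan_eq_span_image, ← hb, Nat.add_sub_cancel_left]
  exact exists_orthonormal_eigenvectors_iff_of_orthonormalBasis (μ := fun i => σ (i + 1) ^ 2) b hT
    htop hmid hlow (fun i hi => by rw [if_pos (by omega)]) (hk4 _ hh1 hh2 rfl)
    (hj1.le.trans (hh2.trans hrm)) S'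

theorem stmt13 {m n : ℕ} (A : Matrix (Fin m) (Fin n) 𝕜) (σ : ℕ → ℝ)
    (hσ : ∀ i : Fin n, σ ((i : ℕ) + 1) = singVal A i)
    (h j k : ℕ) (hh1 : 1 ≤ h) (hh2 : h ≤ A.rank)
    (hgap : σ h = σ (h + 1))
    (hj1 : j < h) (hj2 : j = 0 ∨ σ h < σ j)
    (hj3 : ∀ ℓ, ℓ < h → σ h < σ ℓ → ℓ ≤ j)
    (hk1 : 1 ≤ k) (hk2 : k ≤ A.rank) (hk3 : σ k = σ h)
    (hk4 : ∀ ℓ, 1 ≤ ℓ → ℓ ≤ A.rank → σ ℓ = σ h → ℓ ≤ k)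
    (U : Matrix (Fin m) (Fin m) 𝕜) (V : Matrix (Fin n) (Fin n) 𝕜)
    (Sig : Matrix (Fin m) (Fin n) 𝕜)
    (hU : Uᴴ * U = 1) (hVu : Vᴴ * V = 1)
    (hSig : ∀ (i : Fin m) (jj : Fin n),
      Sig i jj = if (i : ℕ) = (jj : ℕ) then algebraMap ℝ 𝕜 (σ ((i : ℕ) + 1)) else 0)
    (hA : A = U * Sig * Vᴴ)
    (S' : Submodule 𝕜 (EuclideanSpace 𝕜 (Fin m))) (hS' : Module.finrank 𝕜 S' = h) :
    IsLeftDominant A σ h S' ↔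
      ∃ 𝒰 : Submodule 𝕜 (EuclideanSpace 𝕜 (Fin m)),
        Module.finrank 𝕜 𝒰 = h - j ∧ 𝒰 ≤ colSpan U k ⊓ (colSpan U j)ᗮ ∧
        S' = colSpan U j ⊔ 𝒰 :=
  stmt13_general A σ hσ h j k hh1 hh2 hj1 hj2 hj3 hk2 hk3 hk4 U V Sig hU hVu hSig hA S'
end

section
/- Let A ∈ K^{m×n}, let Φ ∈ K^{m×r}, and let P ∈ K^{m×m} be an orthogonal projection. Then ‖(I − Φ Φ†) P‖ ≤ ‖P − Φ B‖ for every B ∈ K^{r×m}, in both the spectral and Frobenius norms, where Φ† is the Moore–Penrose pseudoinverse of Φ. -/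
open Matrix Submodule

variable {𝕜 : Type*} [RCLike 𝕜]

/-!
`Q = 1 - Φ Φ†` is an orthogonal projection (by the Moore–Penrose identities) with `Q Φ = 0`, so
`(1 - Φ Φ†) P = Q (P - Φ B)`. Left multiplication by an orthogonal projection increases neither
norm: `Q` has operator norm at most one, and the Frobenius norm is the `ℓ²` norm of the columns.
-/

namespace IsMoorePenrose

variable {m n : ℕ} {A : Matrix (Fin m) (Fin n) 𝕜} {B : Matrix (Fin n) (Fin m) 𝕜}

theorem isStarProjection_mul (h : IsMoorePenrose A B) : IsStarProjection (A * B) where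
  isIdempotentElem := by rw [IsIdempotentElem, ← Matrix.mul_assoc, h.1]
  isSelfAdjoint := h.2.2.1

theorem one_sub_mul_mul_self (h : IsMoorePenrose A B) : (1 - A * B) * A = 0 := by
  rw [Matrix.sub_mul, Matrix.one_mul, h.1, sub_self]

end IsMoorePenrose

section StarProjection

variable {m n : ℕ} {Q : Matrix (Fin m) (Fin m) 𝕜}

theorem norm_toEuclideanCLM_le_one (hQ : IsStarProjection Q) : ‖toEuclideanCLM (𝕜 := 𝕜) Q‖ ≤ 1 :=
  (hQ.map _).norm_le

theorem toContinuousLinearMap_toEuclideanLin_mul (Q : Matrix (Fin m) (Fin m) 𝕜)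
    (M : Matrix (Fin m) (Fin n) 𝕜) :
    LinearMap.toContinuousLinearMap (toEuclideanLin (Q * M)) =
      (toEuclideanCLM (𝕜 := 𝕜) Q).comp (LinearMap.toContinuousLinearMap (toEuclideanLin M)) := by
  ext x i
  simp [mulVec_mulVec]

theorem specNorm_mul_le_of_isStarProjection (hQ : IsStarProjection Q) (M : Matrix (Fin m) (Fin n) 𝕜) :
    specNorm (Q * M) ≤ specNorm M := by
  unfold specNorm
  rw [toContinuousLinearMap_toEuclideanLin_mul]
  calc _ ≤ ‖toEuclideanCLM (𝕜 := 𝕜) Q‖ * specNorm M := ContinuousLinearMap.opNorm_comp_le _ _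
    _ ≤ specNorm M := mul_le_of_le_one_left (norm_nonneg _) (norm_toEuclideanCLM_le_one hQ)

theorem frobNorm_eq_sqrt_sum_norm_col_sq (M : Matrix (Fin m) (Fin n) 𝕜) :
    frobNorm M = √(∑ j, ‖WithLp.toLp 2 (Mᵀ j)‖ ^ 2) := by
  unfold frobNorm
  rw [Finset.sum_comm]
  congr! with j
  rw [EuclideanSpace.norm_eq, Real.sq_sqrt (by positivity)]
  rfl

theorem frobNorm_mul_le_of_isStarProjection (hQ : IsStarProjection Q) (M : Matrix (Fin m) (Fin n) 𝕜) :
    frobNorm (Q * M) ≤ frobNorm M := by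
  simp only [frobNorm_eq_sqrt_sum_norm_col_sq]
  refine Real.sqrt_le_sqrt (Finset.sum_le_sum fun j _ => ?_)
  have hcol : WithLp.toLp 2 ((Q * M)ᵀ j) = toEuclideanCLM (𝕜 := 𝕜) Q (WithLp.toLp 2 (Mᵀ j)) := by
    ext i
    simp [mul_apply, mulVec, dotProduct]
  rw [hcol]
  gcongr
  exact (ContinuousLinearMap.le_of_opNorm_le _ (norm_toEuclideanCLM_le_one hQ) _).trans_eq (one_mul _)

end StarProjection

theorem stmt17_general {m r : ℕ} (Φ : Matrix (Fin m) (Fin r) 𝕜) (Φd : Matrix (Fin r) (Fin m) 𝕜)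
    (hΦ : IsMoorePenrose Φ Φd) (P : Matrix (Fin m) (Fin m) 𝕜)
    (B : Matrix (Fin r) (Fin m) 𝕜) :
    specNorm ((1 - Φ * Φd) * P) ≤ specNorm (P - Φ * B) ∧
    frobNorm ((1 - Φ * Φd) * P) ≤ frobNorm (P - Φ * B) := by
  have hQ : IsStarProjection (1 - Φ * Φd) := hΦ.isStarProjection_mul.one_sub
  have hcancel : (1 - Φ * Φd) * P = (1 - Φ * Φd) * (P - Φ * B) := by
    rw [Matrix.mul_sub, ← Matrix.mul_assoc, hΦ.one_sub_mul_mul_self, Matrix.zero_mul, sub_zero]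
  rw [hcancel]
  exact ⟨specNorm_mul_le_of_isStarProjection hQ _, frobNorm_mul_le_of_isStarProjection hQ _⟩

theorem stmt17 {m r : ℕ} (Φ : Matrix (Fin m) (Fin r) 𝕜) (Φd : Matrix (Fin r) (Fin m) 𝕜)
    (hΦ : IsMoorePenrose Φ Φd) (P : Matrix (Fin m) (Fin m) 𝕜)
    (hP1 : Pᴴ = P) (hP2 : P * P = P) (B : Matrix (Fin r) (Fin m) 𝕜) :
    specNorm ((1 - Φ * Φd) * P) ≤ specNorm (P - Φ * B) ∧
    frobNorm ((1 - Φ * Φd) * P) ≤ frobNorm (P - Φ * B) :=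
  stmt17_general Φ Φd hΦ P B
end
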